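/- Let p ∈ ℝ^n and P ∈ ℝ^N have strictly positive components, let y > 0, λ > 0, μ > 0, and let u¹, u² : ℝ^n × ℝ^N → ℝ be concave and differentiable. Suppose the bundle (q¹, q², Q) satisfies the budget identity p·(q¹ + q²) + P·Q = y and the first-order conditions ∇_q u¹(q¹, Q) = λ p, μ ∇_q u²(q², Q) = λ p, and ∇_Q u¹(q¹, Q) + μ ∇_Q u²(q², Q) = λ P. Define the Lindahl prices P¹ = ∇_Q u¹(q¹, Q)/λ and P² = μ ∇_Q u²(q², Q)/λ (so that P¹ + P² = P). If reference bundles (q¹₀, Q¹₀) and (q²₀, Q²₀) satisfy u¹(q¹, Q) ≤ u¹(q¹₀, Q¹₀) and u²(q², Q) ≤ u²(q²₀, Q²₀), then p·(q¹₀ + q²₀) + P¹·Q¹₀ + P²·Q²₀ ≥ y. -/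
import Mathlib


noncomputable section

/-- Euclidean dot product of two vectors in `ℝ^k`. -/
def dotp {k : ℕ} (x y : Fin k → ℝ) : ℝ := ∑ j, x j * y j


/-- Supergradient inequality for concave differentiable functions. -/
lemma concave_supergrad {E : Type*} [NormedAddCommGroup E] [NormedSpace ℝ E]
    {u : E → ℝ} (hc : ConcaveOn ℝ Set.univ u) (hd : Differentiable ℝ u)
    (x x0 : E) : u x0 - u x ≤ fderiv ℝ u x (x0 - x) := by
  set v := x0 - x with hv
  have hline : ∀ t : ℝ, HasDerivAt (fun t : ℝ => x + t • v) v t := by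
    intro t
    simpa using ((hasDerivAt_id t).smul_const v).const_add x
  have hg : HasDerivAt (fun t : ℝ => u (x + t • v)) (fderiv ℝ u (x + (0:ℝ) • v) v) 0 :=
    (hd (x + (0:ℝ) • v)).hasFDerivAt.comp_hasDerivAt 0 (hline 0)
  have hgcc : ConcaveOn ℝ Set.univ (fun t : ℝ => u (x + t • v)) := by
    have h := hc.comp_affineMap (AffineMap.lineMap x x0)
    have heq : (u ∘ (AffineMap.lineMap x x0 : ℝ →ᵃ[ℝ] E)) = fun t : ℝ => u (x + t • v) := by
      funext t
      simp [Function.comp, AffineMap.lineMap_apply, hv, add_comm]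
    have hpre : (AffineMap.lineMap x x0 : ℝ →ᵃ[ℝ] E) ⁻¹' Set.univ = Set.univ := by simp
    rw [heq, hpre] at h
    exact h
  have hgc := hgcc.neg
  have hslope := hgc.le_slope_of_hasDerivAt (Set.mem_univ (0:ℝ)) (Set.mem_univ (1:ℝ))
      one_pos hg.neg
  have hx1 : x + (1:ℝ) • v = x0 := by simp [hv]
  have hx0 : x + (0:ℝ) • v = x := by simp
  simp only [slope, Pi.neg_apply, hx1, hx0, sub_zero, div_one, vsub_eq_sub,
    smul_eq_mul] at hslope
  linarith

lemma dotp_add_right {k : ℕ} (x y z : Fin k → ℝ) : dotp x (y + z) = dotp x y + dotp x z := by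
  simp [dotp, mul_add, Finset.sum_add_distrib]

lemma dotp_sub_right {k : ℕ} (x y z : Fin k → ℝ) : dotp x (y - z) = dotp x y - dotp x z := by
  simp [dotp, mul_sub, Finset.sum_sub_distrib]

lemma dotp_add_left {k : ℕ} (x y z : Fin k → ℝ) : dotp (x + y) z = dotp x z + dotp y z := by
  simp [dotp, add_mul, Finset.sum_add_distrib]

/-- given the first-order conditions of the couple's Pareto problem and
the Lindahl prices `P1 = ∇_Q u1 / λ`, `P2 = μ ∇_Q u2 / λ` (so that `P1 + P2 = P`),
any reference bundles at least as good as the optimum cost at least the income `y`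
at prices `(p, P1, P2)`. -/
theorem lindahl_cost_lower_bound
    {n N : ℕ} (hn : 1 ≤ n) (hN : 1 ≤ N)
    (p : Fin n → ℝ) (P : Fin N → ℝ) (y lam mu : ℝ)
    (hp : ∀ j, 0 < p j) (hP : ∀ J, 0 < P J)
    (hy : 0 < y) (hlam : 0 < lam) (hmu : 0 < mu)
    (u1 u2 : (Fin n → ℝ) × (Fin N → ℝ) → ℝ)
    (hc1 : ConcaveOn ℝ Set.univ u1) (hc2 : ConcaveOn ℝ Set.univ u2)
    (hd1 : Differentiable ℝ u1) (hd2 : Differentiable ℝ u2)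
    (q1 q2 : Fin n → ℝ) (Q : Fin N → ℝ)
    (hbudget : dotp p (q1 + q2) + dotp P Q = y)
    -- first-order condition ∇_q u1(q1, Q) = λ p
    (hfoc1 : ∀ v : Fin n → ℝ, fderiv ℝ u1 (q1, Q) (v, 0) = lam * dotp p v)
    -- first-order condition μ ∇_q u2(q2, Q) = λ p
    (hfoc2 : ∀ v : Fin n → ℝ, mu * fderiv ℝ u2 (q2, Q) (v, 0) = lam * dotp p v)
    (P1 P2 : Fin N → ℝ)
    -- Lindahl price P1 = ∇_Q u1(q1, Q) / λ
    (hP1 : ∀ X : Fin N → ℝ, fderiv ℝ u1 (q1, Q) (0, X) = lam * dotp P1 X)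
    -- Lindahl price P2 = μ ∇_Q u2(q2, Q) / λ
    (hP2 : ∀ X : Fin N → ℝ, mu * fderiv ℝ u2 (q2, Q) (0, X) = lam * dotp P2 X)
    -- first-order condition ∇_Q u1 + μ ∇_Q u2 = λ P, i.e. P1 + P2 = P
    (hPsum : P1 + P2 = P)
    (q10 q20 : Fin n → ℝ) (Q10 Q20 : Fin N → ℝ)
    (h1 : u1 (q1, Q) ≤ u1 (q10, Q10)) (h2 : u2 (q2, Q) ≤ u2 (q20, Q20)) :
    dotp p (q10 + q20) + dotp P1 Q10 + dotp P2 Q20 ≥ y := by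
  have hsplit1 : ((q10, Q10) - (q1, Q) : (Fin n → ℝ) × (Fin N → ℝ))
      = ((q10 - q1, 0) : (Fin n → ℝ) × (Fin N → ℝ)) + (0, Q10 - Q) := by
    simp [Prod.ext_iff]
  have hsplit2 : ((q20, Q20) - (q2, Q) : (Fin n → ℝ) × (Fin N → ℝ))
      = ((q20 - q2, 0) : (Fin n → ℝ) × (Fin N → ℝ)) + (0, Q20 - Q) := by
    simp [Prod.ext_iff]
  have A := concave_supergrad hc1 hd1 (q1, Q) (q10, Q10)
  rw [hsplit1, map_add, hfoc1, hP1] at A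
  have B := concave_supergrad hc2 hd2 (q2, Q) (q20, Q20)
  have B' : mu * (u2 (q20, Q20) - u2 (q2, Q))
      ≤ lam * dotp p (q20 - q2) + lam * dotp P2 (Q20 - Q) := by
    have := mul_le_mul_of_nonneg_left B hmu.le
    rw [hsplit2, map_add] at this
    calc mu * (u2 (q20, Q20) - u2 (q2, Q))
        ≤ mu * (fderiv ℝ u2 (q2, Q) (q20 - q2, 0) + fderiv ℝ u2 (q2, Q) (0, Q20 - Q)) := this
      _ = mu * fderiv ℝ u2 (q2, Q) (q20 - q2, 0) + mu * fderiv ℝ u2 (q2, Q) (0, Q20 - Q) := by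
          ring
      _ = lam * dotp p (q20 - q2) + lam * dotp P2 (Q20 - Q) := by rw [hfoc2, hP2]
  have hA0 : 0 ≤ dotp p (q10 - q1) + dotp P1 (Q10 - Q) := by
    have h0 : 0 ≤ lam * (dotp p (q10 - q1) + dotp P1 (Q10 - Q)) := by nlinarith
    nlinarith
  have hB0 : 0 ≤ dotp p (q20 - q2) + dotp P2 (Q20 - Q) := by
    have h0 : 0 ≤ lam * (dotp p (q20 - q2) + dotp P2 (Q20 - Q)) := by nlinarith
    nlinarith
  have hQ : dotp P1 Q + dotp P2 Q = dotp P Q := by rw [← dotp_add_left, hPsum]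
  have hexp : dotp p (q10 + q20) + dotp P1 Q10 + dotp P2 Q20
      - (dotp p (q1 + q2) + dotp P Q)
      = (dotp p (q10 - q1) + dotp P1 (Q10 - Q)) + (dotp p (q20 - q2) + dotp P2 (Q20 - Q)) := by
    rw [dotp_add_right, dotp_add_right, dotp_sub_right, dotp_sub_right, dotp_sub_right,
      dotp_sub_right, ← hQ]
    ring
  linarith [hexp, hA0, hB0, hbudget.ge]
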